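/- arXiv:1409.7640 — 5 statements merged into one kernel-verified Lean document; each statement's English description precedes it below -/
import Mathlib

section
/- Let $\bc \in \R^\ell_+$, $\beta \in \R$, $Q \in \R^{n\times\ell}$, $\alpha \in \R^n$. If there exists $\nu \in \R^\ell_+$ satisfying $D(\nu, e\bc) \le \beta$ and $Q\nu = (\mathbf{1}'\nu)\alpha$, then the signomial $g(x) = \beta \exp\{\alpha' x\} + \sum_{j=1}^\ell c_j \exp\{[Q'x]_j\}$ satisfies $g(x) \ge 0$ for all $x \in \R^n$. -/
/-!
Fix `x` and put `a = α ⬝ᵥ x`, `t j = [Qᵀx]_j - a`. The Fenchel–Young inequality for `t ↦ c eᵗ`,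
`ν t - c eᵗ ≤ ν log (ν / (e c))`, summed over `j` gives `∑ ν_j t_j - ∑ c_j e^{t_j} ≤ D(ν, e c) ≤ β`.
The balance condition `Qν = (𝟙ᵀν) α` makes `∑ ν_j t_j = 0`, so `β + ∑ c_j e^{t_j} ≥ 0`, and
multiplying by `eᵃ` gives `g(x) ≥ 0`.
-/

open Matrix Finset

noncomputable def relEnt {ℓ : ℕ} (ν lam : Fin ℓ → ℝ) : EReal :=
  ∑ j, if ν j = 0 then (0 : EReal) else if lam j = 0 then (⊤ : EReal)
    else ((ν j * Real.log (ν j / lam j) : ℝ) : EReal)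

theorem EReal.coe_finset_sum {ι : Type*} (s : Finset ι) (f : ι → ℝ) :
    ((∑ i ∈ s, f i : ℝ) : EReal) = ∑ i ∈ s, (f i : EReal) :=
  map_sum (⟨⟨Real.toEReal, EReal.coe_zero⟩, EReal.coe_add⟩ : ℝ →+ EReal) f s

theorem Real.mul_sub_mul_exp_le_mul_log {ν c : ℝ} (hν : 0 < ν) (hc : 0 < c) (t : ℝ) :
    ν * t - c * Real.exp t ≤ ν * Real.log (ν / (Real.exp 1 * c)) := by
  have hlog : Real.log (ν / (Real.exp 1 * c)) = Real.log (ν / c) - 1 := by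
    rw [mul_comm, ← div_div, Real.log_div (by positivity) (Real.exp_pos 1).ne', Real.log_exp]
  have hexp : c * Real.exp t = ν * Real.exp (t - Real.log (ν / c)) := by
    rw [Real.exp_sub, Real.exp_log (by positivity)]
    field_simp
  have := mul_le_mul_of_nonneg_left (Real.add_one_le_exp (t - Real.log (ν / c))) hν.le
  rw [hlog, hexp]
  linarith

theorem sum_mul_sub_mul_exp_le_relEnt {ℓ : ℕ} {ν c : Fin ℓ → ℝ} (hν : ∀ j, 0 ≤ ν j)
    (hc : ∀ j, 0 ≤ c j) (t : Fin ℓ → ℝ) :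
    ((∑ j, (ν j * t j - c j * Real.exp (t j)) : ℝ) : EReal) ≤
      relEnt ν (fun j => Real.exp 1 * c j) := by
  rw [relEnt, EReal.coe_finset_sum]
  refine Finset.sum_le_sum fun j _ => ?_
  split_ifs with hν0 hc0
  · rw [hν0, zero_mul, zero_sub, EReal.coe_nonpos, neg_nonpos]
    exact mul_nonneg (hc j) (Real.exp_pos _).le
  · exact le_top
  · have hcj : 0 < c j := (hc j).lt_of_ne fun h => hc0 (by rw [← h, mul_zero])
    exact EReal.coe_le_coe_iff.mpr
      (Real.mul_sub_mul_exp_le_mul_log ((hν j).lt_of_ne' hν0) hcj (t j))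

theorem dotProduct_transpose_mulVec_of_mulVec_eq_smul {R m k : Type*} [CommSemiring R]
    [Fintype m] [Fintype k] {Q : Matrix m k R} {α : m → R} {ν : k → R} {s : R}
    (hQ : Q *ᵥ ν = s • α) (x : m → R) :
    ν ⬝ᵥ Qᵀ *ᵥ x = s * (α ⬝ᵥ x) := by
  rw [dotProduct_mulVec, vecMul_transpose, hQ, smul_dotProduct, smul_eq_mul]

theorem stmt0 {n ℓ : ℕ} (c : Fin ℓ → ℝ) (hc : ∀ j, 0 ≤ c j) (β : ℝ)
    (Q : Matrix (Fin n) (Fin ℓ) ℝ) (α : Fin n → ℝ)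
    (ν : Fin ℓ → ℝ) (hν : ∀ j, 0 ≤ ν j)
    (hD : relEnt ν (fun j => Real.exp 1 * c j) ≤ (β : EReal))
    (hQ : Q.mulVec ν = (∑ j, ν j) • α) :
    ∀ x : Fin n → ℝ,
      0 ≤ β * Real.exp (α ⬝ᵥ x) + ∑ j, c j * Real.exp (Qᵀ.mulVec x j) := by
  intro x
  set a := α ⬝ᵥ x
  set t : Fin ℓ → ℝ := fun j => Qᵀ.mulVec x j - a
  have hbalance : ∑ j, ν j * t j = 0 := by
    have := dotProduct_transpose_mulVec_of_mulVec_eq_smul hQ x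
    simp only [t, mul_sub, Finset.sum_sub_distrib, ← Finset.sum_mul]
    rw [← this, dotProduct]
    ring
  have hβ : ∑ j, (ν j * t j - c j * Real.exp (t j)) ≤ β :=
    EReal.coe_le_coe_iff.mp ((sum_mul_sub_mul_exp_le_relEnt hν hc t).trans hD)
  rw [Finset.sum_sub_distrib, hbalance] at hβ
  have hg : β * Real.exp a + ∑ j, c j * Real.exp (Qᵀ.mulVec x j) =
      Real.exp a * (β + ∑ j, c j * Real.exp (t j)) := by
    simp only [t, Real.exp_sub, mul_add, Finset.mul_sum]
    congr 1
    · ring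
    · exact Finset.sum_congr rfl fun j _ => by field_simp
  rw [hg]
  exact mul_nonneg (Real.exp_pos a).le (by linarith)
end

section
/- Let $g(x) = \beta \exp\{\alpha' x\} + \sum_{j=1}^\ell c_j \exp\{[Q'x]_j\}$ with $\bc \in \R^\ell_+$ (strictly positive entries suffice), $\beta \in \R$, $Q \in \R^{n\times\ell}$, $\alpha \in \R^n$. If $g(x) \ge 0$ for all $x \in \R^n$, then there exists $\nu \in \R^\ell_+$ satisfying $D(\nu, e\bc) \le \beta$ and $Q\nu = (\mathbf{1}'\nu)\alpha$. -/
/-!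
Dividing by `exp (α ⬝ᵥ x)`, the hypothesis says `-β ≤ ∑_{j ∈ J} c j * exp (w j)` for all `w` in the
subspace `S = {Qᵀ x - (α ⬝ᵥ x) • 1}`, where `J` is the support of `c`. If some `d ∈ S` is `≤ 0` on
`J` and negative somewhere on `J`, moving along `w + t • d` with `t → ∞` kills those terms, so the
bound holds on a smaller support and we induct. Otherwise the sum is coercive on `S` (modulo the
coordinates outside `J`) and attains its minimum at some `w₀`. Stationarity says that
`ν = c * exp w₀` (extended by zero) is orthogonal to `S`, which is `Q ν = (∑ ν) • α`, and then
`D(ν, e c) = ∑ ν j * (w₀ j - 1) = -∑ ν j ≤ β`.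
-/

open Matrix Finset

open Filter Topology Real

theorem relEnt_eq_coe_sum {ℓ : ℕ} {ν lam : Fin ℓ → ℝ} (h : ∀ j, ν j ≠ 0 → lam j ≠ 0) :
    relEnt ν lam = ((∑ j, ν j * log (ν j / lam j) : ℝ) : EReal) := by
  refine (sum_congr rfl fun j _ => ?_).trans
    (map_sum (⟨⟨Real.toEReal, EReal.coe_zero⟩, EReal.coe_add⟩ : ℝ →+ EReal) _ _).symm
  by_cases hν : ν j = 0
  · simp [hν]
  · simp [hν, h j hν]

variable {ι : Type*}

theorem tendsto_exp_add_mul_atTop (a : ℝ) {b : ℝ} (hb : b ≤ 0) :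
    Tendsto (fun t => exp (a + t * b)) atTop (𝓝 (if b = 0 then exp a else 0)) := by
  split_ifs with hb0
  · simp [hb0]
  · have : Tendsto (fun t => a + t * b) atTop atBot :=
      tendsto_atBot_add_const_left _ _ (tendsto_id.atTop_mul_const_of_neg (hb.lt_of_ne hb0))
    exact tendsto_exp_atBot.comp this

theorem le_sum_exp_filter_of_recession {S : Submodule ℝ (ι → ℝ)} {J : Finset ι} {c : ι → ℝ}
    {L : ℝ} (hL : ∀ w ∈ S, L ≤ ∑ j ∈ J, c j * exp (w j)) {d : ι → ℝ} (hd : d ∈ S)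
    (hdJ : ∀ j ∈ J, d j ≤ 0) {w : ι → ℝ} (hw : w ∈ S) :
    L ≤ ∑ j ∈ J with d j = 0, c j * exp (w j) := by
  have htend : Tendsto (fun t : ℝ => ∑ j ∈ J, c j * exp ((w + t • d) j)) atTop
      (𝓝 (∑ j ∈ J with d j = 0, c j * exp (w j))) := by
    rw [sum_filter]
    refine tendsto_finsetSum _ fun j hj => ?_
    simpa only [Pi.add_apply, Pi.smul_apply, smul_eq_mul, mul_ite, mul_zero] using
      (tendsto_exp_add_mul_atTop (w j) (hdJ j hj)).const_mul (c j)
  exact ge_of_tendsto' htend fun t => hL _ (S.add_mem hw (S.smul_mem t hd))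

theorem exists_pos_mul_norm_le_sum_posPart [Fintype ι] {S : Submodule ℝ (ι → ℝ)} {c : ι → ℝ}
    (hc : ∀ j, 0 < c j) (hS : ∀ d ∈ S, (∀ j, d j ≤ 0) → d = 0) :
    ∃ δ > 0, ∀ w ∈ S, δ * ‖w‖ ≤ ∑ j, c j * max (w j) 0 := by
  set h : (ι → ℝ) → ℝ := fun d => ∑ j, c j * max (d j) 0
  have hcont : Continuous h := by fun_prop
  have hterm_nonneg : ∀ (d : ι → ℝ) j, 0 ≤ c j * max (d j) 0 := fun d j =>
    mul_nonneg (hc j).le (le_max_right _ _)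
  have hpos : ∀ d ∈ S, d ≠ 0 → 0 < h d := by
    intro d hd hne
    obtain ⟨j, hj⟩ : ∃ j, 0 < d j := by
      by_contra! hle
      exact hne (hS d hd hle)
    exact sum_pos' (fun i _ => hterm_nonneg d i)
      ⟨j, mem_univ j, mul_pos (hc j) (lt_max_of_lt_left hj)⟩
  have hhom : ∀ t : ℝ, 0 ≤ t → ∀ d, h (t • d) = t * h d := by
    intro t ht d
    simp only [h, Pi.smul_apply, smul_eq_mul, mul_sum]
    refine sum_congr rfl fun j _ => ?_
    rw [← mul_zero t, ← mul_max_of_nonneg _ _ ht, mul_zero]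
    ring
  have hK : IsCompact ((S : Set (ι → ℝ)) ∩ Metric.sphere 0 1) :=
    (isCompact_sphere 0 1).inter_left S.closed_of_finiteDimensional
  obtain ⟨δ, hδ, hδK⟩ := hK.exists_forall_le' hcont.continuousOn fun d hd =>
    hpos d hd.1 (ne_zero_of_mem_unit_sphere ⟨d, hd.2⟩)
  refine ⟨δ, hδ, fun w hw => ?_⟩
  rcases eq_or_ne w 0 with rfl | hw0
  · simp
  have hwK : ‖w‖⁻¹ • w ∈ (S : Set (ι → ℝ)) ∩ Metric.sphere 0 1 :=
    ⟨S.smul_mem _ hw, by simp [norm_smul, hw0]⟩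
  calc δ * ‖w‖ ≤ ‖w‖ * h (‖w‖⁻¹ • w) := by
        rw [mul_comm]; exact mul_le_mul_of_nonneg_left (hδK _ hwK) (norm_nonneg w)
    _ = h w := by rw [← hhom _ (norm_nonneg w), smul_inv_smul₀ (norm_ne_zero_iff.2 hw0)]

theorem exists_forall_sum_exp_le [Fintype ι] {S : Submodule ℝ (ι → ℝ)} {c : ι → ℝ}
    (hc : ∀ j, 0 < c j) (hS : ∀ d ∈ S, (∀ j, d j ≤ 0) → d = 0) :
    ∃ w₀ ∈ S, ∀ w ∈ S, ∑ j, c j * exp (w₀ j) ≤ ∑ j, c j * exp (w j) := by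
  obtain ⟨δ, hδ, hδS⟩ := exists_pos_mul_norm_le_sum_posPart hc hS
  set F : S → ℝ := fun w => ∑ j, c j * exp ((w : ι → ℝ) j)
  have hcoercive : ∀ w : S, δ * ‖w‖ ≤ F w := fun w =>
    (hδS w w.2).trans <| sum_le_sum fun j _ => mul_le_mul_of_nonneg_left
      (max_le ((le_add_of_nonneg_right zero_le_one).trans (add_one_le_exp _)) (exp_pos _).le)
      (hc j).le
  have hF : Tendsto F (cocompact S) atTop :=
    tendsto_atTop_mono hcoercive (tendsto_norm_cocompact_atTop.const_mul_atTop hδ)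
  obtain ⟨w₀, hw₀⟩ := (continuous_finsetSum _ fun j _ =>
    continuous_const.mul (continuous_exp.comp ((continuous_apply j).comp continuous_subtype_val)))
    |>.exists_forall_le hF
  exact ⟨w₀, w₀.2, fun w hw => hw₀ ⟨w, hw⟩⟩

theorem exists_forall_sum_exp_le_of_no_recession {S : Submodule ℝ (ι → ℝ)} {J : Finset ι}
    {c : ι → ℝ} (hc : ∀ j ∈ J, 0 < c j)
    (hS : ∀ d ∈ S, (∀ j ∈ J, d j ≤ 0) → ∀ j ∈ J, d j = 0) :
    ∃ w₀ ∈ S, ∀ w ∈ S, ∑ j ∈ J, c j * exp (w₀ j) ≤ ∑ j ∈ J, c j * exp (w j) := by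
  set R := LinearMap.funLeft ℝ ℝ ((↑) : J → ι)
  obtain ⟨_, ⟨w₀, hw₀, rfl⟩, hmin⟩ := exists_forall_sum_exp_le (S := S.map R)
    (c := fun j => c j) (fun j => hc j j.2) (by
      rintro _ ⟨d, hd, rfl⟩ hdJ
      funext j
      exact hS d hd (fun i hi => hdJ ⟨i, hi⟩) j j.2)
  refine ⟨w₀, hw₀, fun w hw => ?_⟩
  simpa only [R, LinearMap.funLeft_apply, sum_coe_sort J fun j => c j * exp (w₀ j),
    sum_coe_sort J fun j => c j * exp (w j)] using hmin _ ⟨w, hw, rfl⟩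

theorem sum_mul_exp_mul_eq_zero_of_forall_le {S : Submodule ℝ (ι → ℝ)} {J : Finset ι}
    {c w₀ : ι → ℝ} (hw₀ : w₀ ∈ S)
    (hmin : ∀ w ∈ S, ∑ j ∈ J, c j * exp (w₀ j) ≤ ∑ j ∈ J, c j * exp (w j)) {w : ι → ℝ}
    (hw : w ∈ S) : ∑ j ∈ J, c j * exp (w₀ j) * w j = 0 := by
  have hloc : IsLocalMin (fun t : ℝ => ∑ j ∈ J, c j * exp (w₀ j + t * w j)) 0 :=
    Eventually.of_forall fun t => by simpa using hmin _ (S.add_mem hw₀ (S.smul_mem t hw))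
  have hder : HasDerivAt (fun t : ℝ => ∑ j ∈ J, c j * exp (w₀ j + t * w j))
      (∑ j ∈ J, c j * exp (w₀ j) * w j) 0 := by
    refine HasDerivAt.fun_sum fun j _ => ?_
    simpa [mul_assoc] using
      (((hasDerivAt_id (0 : ℝ)).mul_const (w j)).const_add (w₀ j)).exp.const_mul (c j)
  exact hloc.hasDerivAt_eq_zero hder

theorem exists_dual_of_forall_le [Fintype ι] {S : Submodule ℝ (ι → ℝ)} {J : Finset ι}
    {c w₀ : ι → ℝ} (hc : ∀ j ∈ J, 0 < c j) (hw₀ : w₀ ∈ S)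
    (hmin : ∀ w ∈ S, ∑ j ∈ J, c j * exp (w₀ j) ≤ ∑ j ∈ J, c j * exp (w j)) :
    ∃ ν : ι → ℝ, (∀ j, 0 ≤ ν j) ∧ (∀ j ∉ J, ν j = 0) ∧ (∀ w ∈ S, ν ⬝ᵥ w = 0) ∧
      ∑ j, ν j * log (ν j / (exp 1 * c j)) = -∑ j ∈ J, c j * exp (w₀ j) := by
  classical
  set ν : ι → ℝ := fun j => if j ∈ J then c j * exp (w₀ j) else 0
  have hνsum : ∀ f : ι → ℝ → ℝ, (∀ j, f j 0 = 0) →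
      ∑ j, f j (ν j) = ∑ j ∈ J, f j (c j * exp (w₀ j)) := by
    intro f hf
    rw [← sum_subset (subset_univ J) fun j _ hj => by simp [ν, hj, hf]]
    exact sum_congr rfl fun j hj => by simp [ν, hj]
  refine ⟨ν, fun j => ?_, fun j hj => if_neg hj, fun w hw => ?_, ?_⟩
  · by_cases hj : j ∈ J
    · simpa [ν, hj] using mul_nonneg (hc j hj).le (exp_pos (w₀ j)).le
    · simp [ν, hj]
  · rw [dotProduct, hνsum (fun j x => x * w j) fun j => zero_mul _]
    exact sum_mul_exp_mul_eq_zero_of_forall_le hw₀ hmin hw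
  · calc ∑ j, ν j * log (ν j / (exp 1 * c j))
        = ∑ j ∈ J, (c j * exp (w₀ j) * w₀ j - c j * exp (w₀ j)) := by
          rw [hνsum (fun j x => x * log (x / (exp 1 * c j))) fun j => zero_mul _]
          refine sum_congr rfl fun j hj => ?_
          have hexp : c j * exp (w₀ j) / (exp 1 * c j) = exp (w₀ j - 1) := by
            rw [exp_sub]; field_simp [(hc j hj).ne']
          rw [hexp, log_exp]
          ring
      _ = -∑ j ∈ J, c j * exp (w₀ j) := by
          rw [sum_sub_distrib, sum_mul_exp_mul_eq_zero_of_forall_le hw₀ hmin hw₀, zero_sub]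

theorem exists_dual_of_le_sum_exp [Fintype ι] {S : Submodule ℝ (ι → ℝ)} {J : Finset ι}
    {c : ι → ℝ} (hc : ∀ j ∈ J, 0 < c j) {L : ℝ} (hL : ∀ w ∈ S, L ≤ ∑ j ∈ J, c j * exp (w j)) :
    ∃ ν : ι → ℝ, (∀ j, 0 ≤ ν j) ∧ (∀ j ∉ J, ν j = 0) ∧ (∀ w ∈ S, ν ⬝ᵥ w = 0) ∧
      ∑ j, ν j * log (ν j / (exp 1 * c j)) ≤ -L := by
  induction J using Finset.strongInduction with
  | H J ih =>
  by_cases hrec : ∃ d ∈ S, (∀ j ∈ J, d j ≤ 0) ∧ ∃ j ∈ J, d j < 0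
  · obtain ⟨d, hd, hdJ, j₀, hj₀, hdj₀⟩ := hrec
    obtain ⟨ν, hν0, hνJ, hνS, hent⟩ := ih {j ∈ J | d j = 0} (filter_ssubset.2 ⟨j₀, hj₀, hdj₀.ne⟩)
      (fun j hj => hc j (mem_filter.1 hj).1)
      (fun w hw => le_sum_exp_filter_of_recession hL hd hdJ hw)
    exact ⟨ν, hν0, fun j hj => hνJ j fun h => hj (mem_filter.1 h).1, hνS, hent⟩
  · push Not at hrec
    obtain ⟨w₀, hw₀, hmin⟩ := exists_forall_sum_exp_le_of_no_recession hc
      fun d hd hdJ j hj => (hdJ j hj).antisymm (hrec d hd hdJ j hj)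
    obtain ⟨ν, hν0, hνJ, hνS, hent⟩ := exists_dual_of_forall_le hc hw₀ hmin
    exact ⟨ν, hν0, hνJ, hνS, hent.trans_le (neg_le_neg (hL w₀ hw₀))⟩

theorem neg_le_sum_pos_mul_exp_sub [Fintype ι] {c v : ι → ℝ} (hc : ∀ j, 0 ≤ c j) {a β : ℝ}
    (h : 0 ≤ β * exp a + ∑ j, c j * exp (v j)) :
    -β ≤ ∑ j with 0 < c j, c j * exp (v j - a) := by
  rw [sum_filter_of_ne fun j _ (hj : c j * exp (v j - a) ≠ 0) =>
    (hc j).lt_of_ne (left_ne_zero_of_mul hj).symm]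
  simp only [exp_sub, mul_div_assoc', ← sum_div]
  rw [le_div_iff₀ (exp_pos a)]
  linarith

theorem stmt1 {n ℓ : ℕ} (c : Fin ℓ → ℝ) (hc : ∀ j, 0 ≤ c j) (β : ℝ)
    (Q : Matrix (Fin n) (Fin ℓ) ℝ) (α : Fin n → ℝ)
    (hg : ∀ x : Fin n → ℝ,
      0 ≤ β * Real.exp (α ⬝ᵥ x) + ∑ j, c j * Real.exp (Qᵀ.mulVec x j)) :
    ∃ ν : Fin ℓ → ℝ, (∀ j, 0 ≤ ν j) ∧
      relEnt ν (fun j => Real.exp 1 * c j) ≤ (β : EReal) ∧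
      Q.mulVec ν = (∑ j, ν j) • α := by
  set A : Matrix (Fin ℓ) (Fin n) ℝ := Qᵀ - vecMulVec 1 α
  obtain ⟨ν, hν0, hνc, hνA, hent⟩ := exists_dual_of_le_sum_exp (S := LinearMap.range A.mulVecLin)
    (J := {j | 0 < c j}) (fun j hj => (mem_filter.1 hj).2) (L := -β) (by
      rintro _ ⟨x, rfl⟩
      simpa only [A, mulVecLin_apply, sub_mulVec, vecMulVec_mulVec, Pi.sub_apply, Pi.smul_apply,
        Pi.one_apply, op_smul_eq_mul, one_mul] using neg_le_sum_pos_mul_exp_sub hc (hg x))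
  refine ⟨ν, hν0, ?_, ?_⟩
  · rw [relEnt_eq_coe_sum fun j hj => ?_]
    · exact_mod_cast (by linarith : _ ≤ β)
    · have : 0 < c j := by by_contra h; exact hj (hνc j (by simpa using h))
      positivity
  · have hνA' : ν ᵥ* A = 0 := dotProduct_eq_zero_iff.1 fun x => by
      rw [← dotProduct_mulVec]; exact hνA _ ⟨x, rfl⟩
    rwa [vecMul_sub, vecMul_transpose, vecMul_vecMulVec, dotProduct_one, sub_eq_zero] at hνA'
end

section
/- Fix exponents $\{\alpha^{(j)}\}_{j=1}^\ell \subset \R^n$. The set $\mathcal{C}_{AGE}(\alpha^{(1)},\dots,\alpha^{(\ell)};\alpha^{(0)}) = \{(\bc,\beta) \in \R^\ell_+ \times \R : \exists \nu \in \R^\ell_+ \text{ s.t. } D(\nu,e\bc) \le \beta,\; \sum_j \alpha^{(j)}\nu_j = (\mathbf{1}'\nu)\alpha^{(0)}\}$ is a convex cone. -/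
/-!
Each term `ν log (ν / λ)` of the relative entropy is the perspective `λ f(ν / λ)` of the convex
function `f x = x log x`, hence jointly subadditive and positively homogeneous in `(ν, λ)`; the
conventions for `ν = 0` or `λ = 0` (the value `+∞`, never `-∞`) are compatible with both.
Consequently the sum of witnesses `ν` for two points of `C_AGE`, or a nonnegative multiple of a
witness, is again a witness, the balance condition being linear in `ν`. A set closed under
addition and nonnegative scaling is convex.
-/

open Finset

/-- The cone of coefficients of AM/GM-exponentials with exponents
`α^{(1)},…,α^{(ℓ)}` and (possibly negative) coefficient `β` on exponent `α^{(0)}`. -/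
def CAGE {n ℓ : ℕ} (α : Fin ℓ → Fin n → ℝ) (α0 : Fin n → ℝ) :
    Set ((Fin ℓ → ℝ) × ℝ) :=
  {p | (∀ j, 0 ≤ p.1 j) ∧ ∃ ν : Fin ℓ → ℝ, (∀ j, 0 ≤ ν j) ∧
    relEnt ν (fun j => Real.exp 1 * p.1 j) ≤ (p.2 : EReal) ∧
    ∑ j, ν j • α j = (∑ j, ν j) • α0}

open Real

theorem EReal.coe_mul_sum_of_nonneg {ι : Type*} (s : Finset ι) {t : ℝ} (ht : 0 ≤ t)
    (f : ι → EReal) : (t : EReal) * ∑ i ∈ s, f i = ∑ i ∈ s, (t : EReal) * f i :=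
  map_sum (⟨⟨fun x => (t : EReal) * x, mul_zero _⟩,
    EReal.left_distrib_of_nonneg_of_ne_top (EReal.coe_nonneg.2 ht) (EReal.coe_ne_top t)⟩ :
    EReal →+ EReal) f s

theorem ConvexOn.perspective_add_le {E : Type*} [AddCommGroup E] [Module ℝ E] {s : Set E}
    {f : E → ℝ} (hf : ConvexOn ℝ s f) {x y : E} {c d : ℝ} (hc : 0 < c) (hd : 0 < d)
    (hx : c⁻¹ • x ∈ s) (hy : d⁻¹ • y ∈ s) :
    (c + d) * f ((c + d)⁻¹ • (x + y)) ≤ c * f (c⁻¹ • x) + d * f (d⁻¹ • y) := by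
  have hcd : 0 < c + d := add_pos hc hd
  have hconv := hf.2 hx hy (div_pos hc hcd).le (div_pos hd hcd).le (by field_simp)
  have hmix : (c / (c + d)) • c⁻¹ • x + (d / (c + d)) • d⁻¹ • y = (c + d)⁻¹ • (x + y) := by
    simp only [smul_smul, smul_add]
    congr 2 <;> field_simp
  rw [hmix, smul_eq_mul, smul_eq_mul] at hconv
  calc (c + d) * f ((c + d)⁻¹ • (x + y))
      ≤ (c + d) * (c / (c + d) * f (c⁻¹ • x) + d / (c + d) * f (d⁻¹ • y)) :=
        mul_le_mul_of_nonneg_left hconv hcd.le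
    _ = c * f (c⁻¹ • x) + d * f (d⁻¹ • y) := by field_simp

theorem add_mul_log_div_add_le {a b c d : ℝ} (ha : 0 ≤ a) (hb : 0 ≤ b) (hc : 0 ≤ c) (hd : 0 ≤ d)
    (hca : c = 0 → a = 0) (hdb : d = 0 → b = 0) :
    (a + b) * log ((a + b) / (c + d)) ≤ a * log (a / c) + b * log (b / d) := by
  rcases hc.eq_or_lt with rfl | hc
  · simp [hca rfl]
  rcases hd.eq_or_lt with rfl | hd
  · simp [hdb rfl]
  have hpersp : ∀ x y : ℝ, 0 < y → y * (y⁻¹ • x * log (y⁻¹ • x)) = x * log (x / y) := by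
    intro x y hy
    rw [smul_eq_mul, ← div_eq_inv_mul]
    field_simp
  have := convexOn_mul_log.perspective_add_le hc hd
    (Set.mem_Ici.2 (smul_nonneg (inv_nonneg.2 hc.le) ha))
    (Set.mem_Ici.2 (smul_nonneg (inv_nonneg.2 hd.le) hb))
  rwa [hpersp _ _ hc, hpersp _ _ hd, hpersp _ _ (add_pos hc hd)] at this

noncomputable def relEntTerm (a c : ℝ) : EReal :=
  if a = 0 then 0 else if c = 0 then ⊤ else ((a * log (a / c) : ℝ) : EReal)

theorem relEnt_eq_sum {ℓ : ℕ} (ν lam : Fin ℓ → ℝ) :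
    relEnt ν lam = ∑ j, relEntTerm (ν j) (lam j) := rfl

section relEntTerm

variable {a b c d : ℝ}

theorem relEntTerm_of_imp (h : c = 0 → a = 0) :
    relEntTerm a c = ((a * log (a / c) : ℝ) : EReal) := by
  unfold relEntTerm
  split_ifs <;> simp_all

theorem relEntTerm_of_eq_zero (ha : a ≠ 0) (hc : c = 0) : relEntTerm a c = ⊤ := by
  simp [relEntTerm, ha, hc]

theorem relEntTerm_ne_bot : relEntTerm a c ≠ ⊥ := by
  unfold relEntTerm
  split_ifs
  exacts [EReal.zero_ne_bot, top_ne_bot, EReal.coe_ne_bot _]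

theorem relEntTerm_add_le (ha : 0 ≤ a) (hb : 0 ≤ b) (hc : 0 ≤ c) (hd : 0 ≤ d) :
    relEntTerm (a + b) (c + d) ≤ relEntTerm a c + relEntTerm b d := by
  by_cases hca : c = 0 → a = 0
  swap
  · obtain ⟨hc0, ha0⟩ := Classical.not_imp.1 hca
    rw [relEntTerm_of_eq_zero ha0 hc0, EReal.top_add_of_ne_bot relEntTerm_ne_bot]
    exact le_top
  by_cases hdb : d = 0 → b = 0
  swap
  · obtain ⟨hd0, hb0⟩ := Classical.not_imp.1 hdb
    rw [relEntTerm_of_eq_zero hb0 hd0, EReal.add_top_of_ne_bot relEntTerm_ne_bot]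
    exact le_top
  have hsum : c + d = 0 → a + b = 0 := fun h => by
    rw [hca (by linarith), hdb (by linarith), add_zero]
  rw [relEntTerm_of_imp hca, relEntTerm_of_imp hdb, relEntTerm_of_imp hsum, ← EReal.coe_add,
    EReal.coe_le_coe_iff]
  exact add_mul_log_div_add_le ha hb hc hd hca hdb

theorem relEntTerm_mul {t : ℝ} (ht : 0 ≤ t) :
    relEntTerm (t * a) (t * c) = t * relEntTerm a c := by
  rcases ht.eq_or_lt with rfl | ht
  · simp [relEntTerm]
  by_cases hca : c = 0 → a = 0
  · have htca : t * c = 0 → t * a = 0 := by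
      simp only [mul_eq_zero, ht.ne', false_or]
      exact hca
    rw [relEntTerm_of_imp hca, relEntTerm_of_imp htca, ← EReal.coe_mul,
      mul_div_mul_left _ _ ht.ne', mul_assoc]
  · obtain ⟨hc0, ha0⟩ := Classical.not_imp.1 hca
    rw [relEntTerm_of_eq_zero ha0 hc0, relEntTerm_of_eq_zero (mul_ne_zero ht.ne' ha0)
      (by rw [hc0, mul_zero]), EReal.coe_mul_top_of_pos ht]

end relEntTerm

theorem relEnt_add_le {ℓ : ℕ} {ν μ lam κ : Fin ℓ → ℝ} (hν : 0 ≤ ν) (hμ : 0 ≤ μ) (hlam : 0 ≤ lam)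
    (hκ : 0 ≤ κ) : relEnt (ν + μ) (lam + κ) ≤ relEnt ν lam + relEnt μ κ := by
  simp only [relEnt_eq_sum, ← sum_add_distrib]
  exact sum_le_sum fun j _ => relEntTerm_add_le (hν j) (hμ j) (hlam j) (hκ j)

theorem relEnt_smul {ℓ : ℕ} (ν lam : Fin ℓ → ℝ) {t : ℝ} (ht : 0 ≤ t) :
    relEnt (t • ν) (t • lam) = t * relEnt ν lam := by
  simp only [relEnt_eq_sum, EReal.coe_mul_sum_of_nonneg _ ht, Pi.smul_apply, smul_eq_mul,
    relEntTerm_mul ht]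

section CAGE

variable {n ℓ : ℕ} {α : Fin ℓ → Fin n → ℝ} {α0 : Fin n → ℝ}

theorem add_mem_CAGE {p q : (Fin ℓ → ℝ) × ℝ} (hp : p ∈ CAGE α α0) (hq : q ∈ CAGE α α0) :
    p + q ∈ CAGE α α0 := by
  obtain ⟨hp1, ν, hν, hνp, hνα⟩ := hp
  obtain ⟨hq1, μ, hμ, hμq, hμα⟩ := hq
  refine ⟨fun j => add_nonneg (hp1 j) (hq1 j), ν + μ, fun j => add_nonneg (hν j) (hμ j), ?_, ?_⟩
  · have hlam : (fun j => exp 1 * (p + q).1 j) =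
        (fun j => exp 1 * p.1 j) + fun j => exp 1 * q.1 j := by
      ext j
      simp [mul_add]
    calc relEnt (ν + μ) (fun j => exp 1 * (p + q).1 j)
        ≤ relEnt ν (fun j => exp 1 * p.1 j) + relEnt μ (fun j => exp 1 * q.1 j) := by
          rw [hlam]
          exact relEnt_add_le hν hμ (fun j => mul_nonneg (exp_pos 1).le (hp1 j))
            (fun j => mul_nonneg (exp_pos 1).le (hq1 j))
      _ ≤ p.2 + q.2 := add_le_add hνp hμq
      _ = ((p + q).2 : EReal) := (EReal.coe_add _ _).symm
  · simp only [Pi.add_apply, add_smul, sum_add_distrib, hνα, hμα]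

theorem smul_mem_CAGE {t : ℝ} (ht : 0 ≤ t) {p : (Fin ℓ → ℝ) × ℝ} (hp : p ∈ CAGE α α0) :
    t • p ∈ CAGE α α0 := by
  obtain ⟨hp1, ν, hν, hνp, hνα⟩ := hp
  refine ⟨fun j => mul_nonneg ht (hp1 j), t • ν, fun j => mul_nonneg ht (hν j), ?_, ?_⟩
  · have hlam : (fun j => exp 1 * (t • p).1 j) = t • fun j => exp 1 * p.1 j := by
      ext j
      simp only [Prod.smul_fst, Pi.smul_apply, smul_eq_mul]
      ring
    rw [hlam, relEnt_smul _ _ ht, Prod.smul_snd, smul_eq_mul, EReal.coe_mul]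
    exact mul_le_mul_of_nonneg_left hνp (EReal.coe_nonneg.2 ht)
  · simp only [Pi.smul_apply, smul_eq_mul, mul_smul, ← smul_sum, hνα, ← mul_sum]

end CAGE

theorem stmt5 {n ℓ : ℕ} (α : Fin ℓ → Fin n → ℝ) (α0 : Fin n → ℝ) :
    (∀ p ∈ CAGE α α0, ∀ q ∈ CAGE α α0, p + q ∈ CAGE α α0) ∧
    (∀ t : ℝ, 0 ≤ t → ∀ p ∈ CAGE α α0, t • p ∈ CAGE α α0) ∧
    Convex ℝ (CAGE α α0) :=
  ⟨fun _ hp _ hq => add_mem_CAGE hp hq, fun _ ht _ hp => smul_mem_CAGE ht hp,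
    fun _ hp _ hq _ _ ha hb _ => add_mem_CAGE (smul_mem_CAGE ha hp) (smul_mem_CAGE hb hq)⟩
end

section
/- Fix exponents $\{\alpha^{(j)}\}_{j=1}^\ell \subset \R^n$ with $\alpha^{(1)} = 0$ and a signomial $f$ with respect to these exponents. For every $p \in \mathbb{Z}_+$, the SAGE hierarchy lower bounds satisfy $f^{(p)}_{SAGE} \le f^{(p+1)}_{SAGE}$, where $f^{(p)}_{SAGE} = \sup\{\gamma \in \R : (\sum_{j=1}^\ell \exp\{\alpha^{(j)\prime}x\})^p [f(x)-\gamma] \in SAGE(E_{p+1}(\{\alpha^{(j)}\}))\}$. -/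
open Finset Matrix

/-- `Ep p α` is the set `E_p({α^{(j)}})` of nonnegative-integer combinations of
the exponents with total weight at most `p`. -/
def Ep {n ℓ : ℕ} (p : ℕ) (α : Fin ℓ → Fin n → ℝ) : Set (Fin n → ℝ) :=
  {v | ∃ lam : Fin ℓ → ℕ, (∑ j, lam j) ≤ p ∧ v = ∑ j, (lam j : ℝ) • α j}

/-- An AM/GM-exponential with exponents in `M`: a globally nonnegative signomial
with exponents in `M` having at most one negative coefficient. -/
def IsAMGMExp {n : ℕ} (M : Set (Fin n → ℝ)) (g : (Fin n → ℝ) → ℝ) : Prop :=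
  (∀ x, 0 ≤ g x) ∧
  ∃ (k : ℕ) (β : Fin k → Fin n → ℝ) (c : Fin k → ℝ) (j0 : Fin k),
    (∀ j, β j ∈ M) ∧ (∀ j, j ≠ j0 → 0 ≤ c j) ∧
    ∀ x, g x = ∑ j, c j * Real.exp (β j ⬝ᵥ x)

/-- A sum of AM/GM-exponentials with exponents in `M`. -/
def InSAGE {n : ℕ} (M : Set (Fin n → ℝ)) (f : (Fin n → ℝ) → ℝ) : Prop :=
  ∃ (m : ℕ) (g : Fin m → (Fin n → ℝ) → ℝ),
    (∀ i, IsAMGMExp M (g i)) ∧ ∀ x, f x = ∑ i, g i x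

lemma InSAGE_congr {n : ℕ} {M : Set (Fin n → ℝ)} {f g : (Fin n → ℝ) → ℝ}
    (h : InSAGE M f) (he : ∀ x, f x = g x) : InSAGE M g := by
  obtain ⟨m, gs, h1, h2⟩ := h
  exact ⟨m, gs, h1, fun x => (he x) ▸ h2 x⟩

lemma InSAGE_zero {n : ℕ} (M : Set (Fin n → ℝ)) : InSAGE M (fun _ => 0) :=
  ⟨0, fun i => i.elim0, fun i => i.elim0, by simp⟩

lemma InSAGE_add {n : ℕ} {M : Set (Fin n → ℝ)} {f g : (Fin n → ℝ) → ℝ}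
    (hf : InSAGE M f) (hg : InSAGE M g) : InSAGE M (fun x => f x + g x) := by
  obtain ⟨m1, g1, h1, e1⟩ := hf
  obtain ⟨m2, g2, h2, e2⟩ := hg
  refine ⟨m1 + m2, Fin.append g1 g2, ?_, ?_⟩
  · intro i
    refine Fin.addCases (fun i => ?_) (fun i => ?_) i
    · rw [Fin.append_left]; exact h1 i
    · rw [Fin.append_right]; exact h2 i
  · intro x
    rw [Fin.sum_univ_add]
    simp only [Fin.append_left, Fin.append_right]
    rw [e1 x, e2 x]

lemma InSAGE_sum {n ℓ : ℕ} {M : Set (Fin n → ℝ)} {h : Fin ℓ → (Fin n → ℝ) → ℝ}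
    (hh : ∀ j, InSAGE M (h j)) : InSAGE M (fun x => ∑ j, h j x) := by
  classical
  induction (Finset.univ : Finset (Fin ℓ)) using Finset.cons_induction with
  | empty => exact InSAGE_congr (InSAGE_zero M) (by simp)
  | cons a s ha ih =>
      exact InSAGE_congr (InSAGE_add (hh a) ih) (fun x => (Finset.sum_cons (f := fun j => h j x) ha).symm)

lemma IsAMGMExp_mul_exp {n ℓ p : ℕ} (α : Fin ℓ → Fin n → ℝ) (j : Fin ℓ)
    {g : (Fin n → ℝ) → ℝ} (hg : IsAMGMExp (Ep p α) g) :
    IsAMGMExp (Ep (p + 1) α) (fun x => Real.exp (α j ⬝ᵥ x) * g x) := by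
  classical
  obtain ⟨hpos, k, β, cc, j0, hβ, hc, he⟩ := hg
  refine ⟨fun x => mul_nonneg (Real.exp_nonneg _) (hpos x),
    k, fun i => β i + α j, cc, j0, ?_, hc, ?_⟩
  · intro i
    obtain ⟨lam, hsum, hv⟩ := hβ i
    refine ⟨fun i' => lam i' + if i' = j then 1 else 0, ?_, ?_⟩
    · rw [Finset.sum_add_distrib]
      simp only [Finset.sum_ite_eq', Finset.mem_univ, if_true]
      omega
    · push_cast
      simp only [add_smul, Finset.sum_add_distrib, ite_smul, one_smul, zero_smul,
        Finset.sum_ite_eq', Finset.mem_univ, if_true]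
      rw [← hv]
  · intro x
    dsimp only
    rw [he x, Finset.mul_sum]
    refine Finset.sum_congr rfl fun i _ => ?_
    rw [add_dotProduct, Real.exp_add]
    ring

lemma InSAGE_mul_exp {n ℓ p : ℕ} (α : Fin ℓ → Fin n → ℝ) (j : Fin ℓ)
    {g : (Fin n → ℝ) → ℝ} (hg : InSAGE (Ep p α) g) :
    InSAGE (Ep (p + 1) α) (fun x => Real.exp (α j ⬝ᵥ x) * g x) := by
  obtain ⟨m, gs, h1, h2⟩ := hg
  refine ⟨m, fun i x => Real.exp (α j ⬝ᵥ x) * gs i x,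
    fun i => IsAMGMExp_mul_exp α j (h1 i), fun x => ?_⟩
  dsimp only
  rw [h2 x, Finset.mul_sum]

theorem stmt8 {n ℓ : ℕ} (α : Fin ℓ → Fin n → ℝ) (j1 : Fin ℓ) (hα : α j1 = 0)
    (c : Fin ℓ → ℝ) (f : (Fin n → ℝ) → ℝ)
    (hf : ∀ x, f x = ∑ j, c j * Real.exp (α j ⬝ᵥ x)) (p : ℕ) :
    (⨆ γ ∈ {γ : ℝ | InSAGE (Ep (p + 1) α)
        (fun x => (∑ j, Real.exp (α j ⬝ᵥ x)) ^ p * (f x - γ))}, (γ : EReal)) ≤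
    ⨆ γ ∈ {γ : ℝ | InSAGE (Ep (p + 2) α)
        (fun x => (∑ j, Real.exp (α j ⬝ᵥ x)) ^ (p + 1) * (f x - γ))}, (γ : EReal) := by
  refine biSup_mono fun γ hγ => ?_
  simp only [Set.mem_setOf_eq] at hγ ⊢
  have key : ∀ j : Fin ℓ, InSAGE (Ep (p + 2) α)
      (fun x => Real.exp (α j ⬝ᵥ x) *
        ((∑ j', Real.exp (α j' ⬝ᵥ x)) ^ p * (f x - γ))) :=
    fun j => InSAGE_mul_exp α j hγ
  refine InSAGE_congr (InSAGE_sum key) fun x => ?_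
  rw [← Finset.sum_mul]
  ring
end

section
/- Let $u_0, u_1, \dots, u_s \in \R[Y_1,\dots,Y_\ell]$ be homogeneous polynomials, and let $\mathcal{V} = \{y \in \R^\ell_+ : u_k(y) = 0, k = 1,\dots,s\}$. If $u_0(y) > 0$ for all $y \in \mathcal{V} \setminus \{0\}$, then there exists $p \in \mathbb{Z}_+$ such that $(\sum_{j=1}^\ell y_j)^p u_0(y) = \tau(y) + \theta(y)$, where $\tau$ is a polynomial with all nonnegative coefficients and $\theta$ lies in the ideal generated by $u_1,\dots,u_s$. -/
/-!
Write `S = ∑ Y_i` and `Δ` for the standard simplex. By compactness of `Δ` there is a constant `M`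
with `u₀ + M ∑ u_k²` positive on `Δ`. Multiplying each summand by a power of `S`, which is `1` on
`Δ`, turns it into a form `F` of a single degree `e`, still positive on `Δ` and congruent to a
power of `S` times `u₀` modulo the ideal. Pólya's theorem then gives `p` such that `S^p F` has
nonnegative coefficients: for `|m| = N = p + e` the coefficient of `Y^m` is `p! / ∏ m_i!` times
`∑_δ c_δ ∏_i (m_i)_{δ_i}`, and the falling factorials `(m_i)_{δ_i} / N^{δ_i}` differ from
`(m_i / N)^{δ_i}` by `O(e² / N)`, so that sum is `N^e (F(m / N) + O(1 / N)) > 0` once `N` is large.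
-/

open Finset
open scoped Nat

theorem norm_prod_sub_prod_le {ι R : Type*} [NormedCommRing R] [NormOneClass R]
    (s : Finset ι) {b c : ι → R} (hb : ∀ t ∈ s, ‖b t‖ ≤ 1) (hc : ∀ t ∈ s, ‖c t‖ ≤ 1) :
    ‖∏ t ∈ s, b t - ∏ t ∈ s, c t‖ ≤ ∑ t ∈ s, ‖b t - c t‖ := by
  induction s using Finset.cons_induction with
  | empty => simp
  | cons a s ha ih =>
    simp only [forall_mem_cons] at hb hc
    have hbs : ‖∏ t ∈ s, b t‖ ≤ 1 :=
      (Finset.norm_prod_le _ _).trans (prod_le_one (fun _ _ => norm_nonneg _) hb.2)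
    rw [prod_cons, prod_cons, sum_cons]
    calc ‖b a * ∏ t ∈ s, b t - c a * ∏ t ∈ s, c t‖
        = ‖(b a - c a) * ∏ t ∈ s, b t + c a * (∏ t ∈ s, b t - ∏ t ∈ s, c t)‖ := by ring_nf
      _ ≤ ‖b a - c a‖ * ‖∏ t ∈ s, b t‖ + ‖c a‖ * ‖∏ t ∈ s, b t - ∏ t ∈ s, c t‖ :=
        norm_add_le_of_le (norm_mul_le _ _) (norm_mul_le _ _)
      _ ≤ ‖b a - c a‖ * 1 + 1 * ∑ t ∈ s, ‖b t - c t‖ := by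
        gcongr
        exacts [hc.1, ih hb.2 hc.2]
      _ = _ := by ring

theorem Nat.cast_descFactorial_eq_prod_range {R : Type*} [CommRing R] (n k : ℕ) :
    (n.descFactorial k : R) = ∏ j ∈ range k, ((n : R) - j) := by
  rw [← descPochhammer_eval_eq_descFactorial, descPochhammer_eval_eq_prod_range]

theorem abs_prod_descFactorial_div_sub_prod_pow_le {σ : Type*} [Fintype σ] (m δ : σ →₀ ℕ)
    {N : ℕ} (hN : 0 < N) (hm : ∀ i, m i ≤ N) (hδ : δ.degree ≤ N) :
    |(∏ i, ((m i).descFactorial (δ i) : ℝ)) / N ^ δ.degree - ∏ i, ((m i : ℝ) / N) ^ δ i|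
      ≤ (δ.degree : ℝ) ^ 2 / N := by
  -- both products run over the pairs `(i, j)` with `j < δ i`
  set T := univ.sigma fun i => range (δ i)
  have hN' : (0 : ℝ) < N := by exact_mod_cast hN
  have hcard : T.card = δ.degree := by simp [T, Finsupp.degree_eq_sum]
  have hj : ∀ t ∈ T, (t.2 : ℝ) ≤ δ.degree := by
    intro t ht
    simp only [T, mem_sigma, mem_univ, mem_range, true_and] at ht
    exact_mod_cast ht.le.trans (Finsupp.le_degree _ _)
  have hfall : (∏ i, ((m i).descFactorial (δ i) : ℝ)) / N ^ δ.degree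
      = ∏ t ∈ T, (((m t.1 : ℝ) - t.2) / N) := by
    rw [← hcard, prod_div_distrib, prod_const, prod_sigma]
    simp only [Nat.cast_descFactorial_eq_prod_range]
  have hpow : ∏ i, ((m i : ℝ) / N) ^ δ i = ∏ t ∈ T, ((m t.1 : ℝ) / N) := by
    simp only [T, prod_sigma, prod_const, card_range]
  have hunit : ∀ t ∈ T, |(m t.1 : ℝ) / N| ≤ 1 := fun t _ => by
    rw [abs_of_nonneg (by positivity), div_le_one hN']
    exact_mod_cast hm t.1
  have hunit' : ∀ t ∈ T, |((m t.1 : ℝ) - t.2) / N| ≤ 1 := fun t ht => by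
    have : (t.2 : ℝ) ≤ N := (hj t ht).trans (by exact_mod_cast hδ)
    have : (m t.1 : ℝ) ≤ N := by exact_mod_cast hm t.1
    rw [abs_div, abs_of_pos hN', div_le_one hN', abs_le]
    constructor <;> linarith [(m t.1).cast_nonneg (α := ℝ), t.2.cast_nonneg (α := ℝ)]
  rw [hfall, hpow]
  calc |∏ t ∈ T, (((m t.1 : ℝ) - t.2) / N) - ∏ t ∈ T, ((m t.1 : ℝ) / N)|
      ≤ ∑ t ∈ T, |((m t.1 : ℝ) - t.2) / N - (m t.1 : ℝ) / N| :=
        norm_prod_sub_prod_le T (b := fun t => ((m t.1 : ℝ) - t.2) / N)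
          (c := fun t => (m t.1 : ℝ) / N) hunit' hunit
    _ ≤ ∑ _t ∈ T, (δ.degree : ℝ) / N := sum_le_sum fun t ht => by
        rw [← sub_div, sub_sub_cancel_left, abs_div, abs_neg, Nat.abs_cast, abs_of_pos hN']
        gcongr
        exact_mod_cast hj t ht
    _ = (δ.degree : ℝ) ^ 2 / N := by rw [sum_const, hcard, nsmul_eq_mul]; ring

namespace MvPolynomial

variable {σ R : Type*} [Fintype σ] [CommSemiring R]

theorem isHomogeneous_sum_X : (∑ i, X i : MvPolynomial σ R).IsHomogeneous 1 :=
  IsHomogeneous.sum _ _ _ fun i _ => isHomogeneous_X R i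

theorem IsHomogeneous.sum_X_pow_mul {f : MvPolynomial σ R} {d : ℕ} (hf : f.IsHomogeneous d)
    (n : ℕ) : ((∑ i, X i) ^ n * f).IsHomogeneous (n + d) := by
  simpa using (isHomogeneous_sum_X.pow n).mul hf

def descFactorialEval (F : MvPolynomial σ R) (m : σ →₀ ℕ) : R :=
  ∑ δ ∈ F.support, coeff δ F * ∏ i, ((m i).descFactorial (δ i) : R)

theorem prod_factorial_mul_coeff_sum_X_pow_mul_monomial {m δ : σ →₀ ℕ} {p : ℕ}
    (hm : m.degree = p + δ.degree) (r : R) :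
    (∏ i, ((m i)! : R)) * coeff m ((∑ i, X i) ^ p * monomial δ r)
      = p ! * (r * ∏ i, ((m i).descFactorial (δ i) : R)) := by
  classical
  rw [coeff_mul_monomial']
  split_ifs with hδm
  · have hdeg : (m - δ).degree = p := by
      have := congrArg Finsupp.degree (tsub_add_cancel_of_le hδm)
      rw [map_add] at this
      omega
    have hfac : ∀ i, (m i)! = ((m - δ) i)! * (m i).descFactorial (δ i) := fun i =>
      (Nat.factorial_mul_descFactorial (Finsupp.le_def.mp hδm i)).symm
    have hnat : (∏ i, (m i)!) * (m - δ).multinomial = p ! * ∏ i, (m i).descFactorial (δ i) := by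
      rw [Finsupp.multinomial_eq_of_support_subset (subset_univ _),
        prod_congr rfl fun i _ => hfac i, prod_mul_distrib, mul_right_comm, Nat.multinomial_spec,
        ← Finsupp.degree_eq_sum, hdeg]
    rw [coeff_sum_X_pow_of_fintype, if_pos (show (m - δ).sum (fun _ k => k) = p from hdeg)]
    calc _ = (((∏ i, (m i)!) * (m - δ).multinomial : ℕ) : R) * r := by push_cast; ring
      _ = _ := by rw [hnat]; push_cast; ring
  · obtain ⟨i, hi⟩ : ∃ i, m i < δ i := by
      simpa [Finsupp.le_def] using hδm
    rw [mul_zero, prod_eq_zero (mem_univ i) (by simp [Nat.descFactorial_eq_zero_iff_lt.mpr hi]),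
      mul_zero, mul_zero]

theorem IsHomogeneous.prod_factorial_mul_coeff_sum_X_pow_mul {F : MvPolynomial σ R} {e : ℕ}
    (hF : F.IsHomogeneous e) {m : σ →₀ ℕ} {p : ℕ} (hm : m.degree = p + e) :
    (∏ i, ((m i)! : R)) * coeff m ((∑ i, X i) ^ p * F) = p ! * descFactorialEval F m := by
  conv_lhs => rw [F.as_sum]
  rw [mul_sum, coeff_sum, mul_sum, descFactorialEval, mul_sum]
  refine sum_congr rfl fun δ hδ => ?_
  have hδe : δ.degree = e := (hF.degree_eq_sum_deg_support hδ).symm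
  exact prod_factorial_mul_coeff_sum_X_pow_mul_monomial (hδe ▸ hm) _

theorem abs_descFactorialEval_div_sub_eval_le {F : MvPolynomial σ ℝ} {e : ℕ}
    (hF : F.IsHomogeneous e) (m : σ →₀ ℕ) {N : ℕ} (hN : 0 < N) (hm : ∀ i, m i ≤ N)
    (he : e ≤ N) :
    |descFactorialEval F m / N ^ e - eval (fun i => (m i : ℝ) / N) F|
      ≤ (∑ δ ∈ F.support, |coeff δ F|) * e ^ 2 / N := by
  rw [descFactorialEval, eval_eq', sum_div, ← sum_sub_distrib, sum_mul, sum_div]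
  refine (abs_sum_le_sum_abs _ _).trans (sum_le_sum fun δ hδ => ?_)
  have hδe : δ.degree = e := (hF.degree_eq_sum_deg_support hδ).symm
  rw [mul_div_assoc, ← mul_sub, abs_mul, mul_div_assoc]
  gcongr
  subst hδe
  exact abs_prod_descFactorial_div_sub_prod_pow_le m δ hN hm he

theorem IsHomogeneous.exists_coeff_sum_X_pow_mul_nonneg {F : MvPolynomial σ ℝ} {e : ℕ}
    (hF : F.IsHomogeneous e) (hpos : ∀ x ∈ stdSimplex ℝ σ, 0 < eval x F) :
    ∃ p : ℕ, ∀ m, 0 ≤ coeff m ((∑ i, X i) ^ p * F) := by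
  obtain ⟨ε, hε, hεF⟩ :=
    (isCompact_stdSimplex ℝ σ).exists_forall_le' (continuous_eval F).continuousOn hpos
  set A := ∑ δ ∈ F.support, |coeff δ F|
  obtain ⟨p, hp⟩ := exists_nat_gt (A * e ^ 2 / ε)
  refine ⟨p, fun m => ?_⟩
  by_cases hm : m.degree = p + e
  swap
  · exact ((hF.sum_X_pow_mul p).coeff_eq_zero hm).ge
  set N := p + e
  have hp0 : (0 : ℝ) < p := lt_of_le_of_lt (by positivity) hp
  have hN : (0 : ℝ) < N := hp0.trans_le (by exact_mod_cast Nat.le_add_right p e)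
  have hx : (fun i => (m i : ℝ) / N) ∈ stdSimplex ℝ σ := by
    refine ⟨fun i => by positivity, ?_⟩
    rw [← sum_div, div_eq_one_iff_eq hN.ne']
    exact_mod_cast (Finsupp.degree_eq_sum m).symm.trans hm
  have happrox := abs_descFactorialEval_div_sub_eval_le hF m (by exact_mod_cast hN)
    (fun i => (Finsupp.le_degree i m).trans hm.le) (Nat.le_add_left e p)
  have herror : A * e ^ 2 / N < ε := by
    rw [div_lt_iff₀ hN]
    rw [div_lt_iff₀ hε] at hp
    have : (p : ℝ) ≤ N := by exact_mod_cast Nat.le_add_right p e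
    nlinarith
  have hD : 0 ≤ descFactorialEval F m := by
    have : 0 ≤ descFactorialEval F m / N ^ e := by
      linarith [(abs_le.mp happrox).1, hεF _ hx]
    simpa [hN.ne'] using mul_nonneg this (pow_nonneg hN.le e)
  refine nonneg_of_mul_nonneg_right ?_ (by positivity : (0 : ℝ) < ∏ i, ((m i)! : ℝ))
  rw [hF.prod_factorial_mul_coeff_sum_X_pow_mul hm]
  positivity

end MvPolynomial

theorem IsCompact.exists_forall_pos_add_mul {X : Type*} [TopologicalSpace X] {K : Set X}
    (hK : IsCompact K) {f g : X → ℝ} (hf : Continuous f) (hg : Continuous g)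
    (hg0 : ∀ x ∈ K, 0 ≤ g x) (hfg : ∀ x ∈ K, g x = 0 → 0 < f x) :
    ∃ M : ℝ, ∀ x ∈ K, 0 < f x + M * g x := by
  obtain ⟨B, hB⟩ := (hK.image hf).bddBelow
  obtain ⟨c, hc, hcg⟩ := (hK.inter_right (isClosed_le hf continuous_const)).exists_forall_le'
    hg.continuousOn (a := 0) fun x hx =>
      (hg0 x hx.1).lt_of_ne' fun h => (hfg x hx.1 h).not_ge hx.2
  refine ⟨(1 + |B|) / c, fun x hx => ?_⟩
  have hM : 0 ≤ (1 + |B|) / c := by positivity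
  by_cases hfx : f x ≤ 0
  · have hBx : B ≤ f x := hB ⟨x, hx, rfl⟩
    have : 1 + |B| ≤ (1 + |B|) / c * g x := by
      rw [div_mul_eq_mul_div, le_div_iff₀ hc]
      gcongr
      exact hcg x ⟨hx, hfx⟩
    linarith [neg_abs_le B]
  · exact add_pos_of_pos_of_nonneg (not_le.mp hfx) (mul_nonneg hM (hg0 x hx))

open MvPolynomial

theorem stmt17 {ℓ s : ℕ} (u0 : MvPolynomial (Fin ℓ) ℝ)
    (u : Fin s → MvPolynomial (Fin ℓ) ℝ)
    (d0 : ℕ) (d : Fin s → ℕ)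
    (h0 : u0.IsHomogeneous d0) (hk : ∀ k, (u k).IsHomogeneous (d k))
    (hpos : ∀ y : Fin ℓ → ℝ, (∀ i, 0 ≤ y i) →
      (∀ k, MvPolynomial.eval y (u k) = 0) → y ≠ 0 →
      0 < MvPolynomial.eval y u0) :
    ∃ (p : ℕ) (τ θ : MvPolynomial (Fin ℓ) ℝ),
      (∀ m, 0 ≤ τ.coeff m) ∧ θ ∈ Ideal.span (Set.range u) ∧
      (∑ j, MvPolynomial.X j) ^ p * u0 = τ + θ := by
  set S : MvPolynomial (Fin ℓ) ℝ := ∑ j, X j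
  set e := d0 + 2 * ∑ k, d k
  have hdk : ∀ k, d k * 2 ≤ e := fun k => by
    have := single_le_sum (fun j _ => Nat.zero_le (d j)) (mem_univ k)
    omega
  set G : MvPolynomial (Fin ℓ) ℝ := ∑ k, S ^ (e - d k * 2) * u k ^ 2
  have hG : G.IsHomogeneous e := IsHomogeneous.sum _ _ _ fun k _ => by
    simpa [Nat.sub_add_cancel (hdk k)] using ((hk k).pow 2).sum_X_pow_mul (e - d k * 2)
  have hu0 : (S ^ (e - d0) * u0).IsHomogeneous e := by
    have := h0.sum_X_pow_mul (e - d0)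
    rwa [Nat.sub_add_cancel (Nat.le_add_right d0 _)] at this
  have hsq : ∀ y, ∑ k, eval y (u k) ^ 2 = 0 → ∀ k, eval y (u k) = 0 := fun y hy k =>
    pow_eq_zero_iff two_ne_zero |>.mp <|
      (sum_eq_zero_iff_of_nonneg fun k _ => sq_nonneg _).mp hy k (mem_univ k)
  obtain ⟨M, hM⟩ := (isCompact_stdSimplex ℝ (Fin ℓ)).exists_forall_pos_add_mul
    (continuous_eval u0) (continuous_finsetSum _ fun k _ => (continuous_eval (u k)).pow 2)
    (fun y _ => sum_nonneg fun k _ => sq_nonneg _)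
    fun y hy hg => hpos y hy.1 (hsq y hg) fun h => by simpa [h] using hy.2
  have hS : ∀ y ∈ stdSimplex ℝ (Fin ℓ), eval y S = 1 := fun y hy => by simpa [S] using hy.2
  have hF : (S ^ (e - d0) * u0 + C M * G).IsHomogeneous e :=
    hu0.add (by simpa using (isHomogeneous_C _ M).mul hG)
  obtain ⟨p, hp⟩ := hF.exists_coeff_sum_X_pow_mul_nonneg fun y hy => by
    simpa [hS y hy, G] using hM y hy
  refine ⟨p + (e - d0), S ^ p * (S ^ (e - d0) * u0 + C M * G), -(S ^ p * C M * G), hp, ?_,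
    by ring⟩
  refine neg_mem (Ideal.mul_mem_left _ _ (Ideal.sum_mem _ fun k _ => ?_))
  rw [pow_two, ← mul_assoc]
  exact Ideal.mul_mem_left _ _ (Ideal.subset_span ⟨k, rfl⟩)
end
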